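/- Let Y and Z be jointly Gaussian, centered, with equal variance σ² = 𝔼Y² = 𝔼Z² and 𝔼(YZ) ≥ 0. Let F': ℝ → ℝ be an odd function with Hermite/chaos expansion F'(Y) = ∑_{n≥0} (c_n/(2n+1)!) Y^{⋄(2n+1)} where c_n = 𝔼 F^{(2n+2)}(Y), and suppose 𝔼(F'(Y))² = ∑_{n≥0} c_n² σ^{4n+2}/(2n+1)! < ∞. Set a = (1/2)𝔼F''(Y) = c_0/2. Then 𝔼(F'(Y)F'(Z)) − 4a² 𝔼(YZ) = ∑_{n≥1} (c_n²/(2n+1)!) (𝔼YZ)^{2n+1}, and consequently for every β' ∈ (0,1], |𝔼(F'(Y)F'(Z)) − 4a² 𝔼(YZ)| ≤ σ^{-2(1+β')} 𝔼(F'(Y))² · (𝔼YZ)^{1+β'}. -/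

import Mathlib

/-!
Wick's formula makes the odd Wick powers of `Y` and `Z` biorthogonal, so by continuity of the
`L²` inner product `𝔼 F'(Y)F'(Z) = ∑ c_n² ρ^{2n+1}/(2n+1)!`, a series of nonnegative terms whose
`n = 0` term is `4a²ρ`. For `n ≥ 1`, `0 ≤ ρ ≤ σ²` and `1 + β' ≤ 2n + 1` give
`ρ^{2n+1} ≤ σ^{-2(1+β')} ρ^{1+β'} (σ²)^{2n+1}`, and with `ρ` replaced by `σ²` the series sums
to `𝔼 F'(Y)²`.
-/

open MeasureTheory Filter

/-- The `k`-th Wick power of `x` relative to variance `σ²`: `x^{⋄k} = σ^k He_k(x/σ)`,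
where `He_k` is the probabilists' Hermite polynomial. -/
noncomputable def wick (σ : ℝ) (k : ℕ) (x : ℝ) : ℝ :=
  σ ^ k * Polynomial.aeval (x / σ) (Polynomial.hermite k)

open Topology

namespace MeasureTheory

variable {Ω : Type*} [MeasurableSpace Ω] {μ : Measure Ω}

lemma MemLp.integral_mul_eq_inner_toLp {f g : Ω → ℝ} (hf : MemLp f 2 μ) (hg : MemLp g 2 μ) :
    ∫ ω, f ω * g ω ∂μ = inner ℝ (hf.toLp f) (hg.toLp g) := by
  rw [L2.inner_def]
  refine integral_congr_ae ?_
  filter_upwards [hf.coeFn_toLp, hg.coeFn_toLp] with ω hfω hgω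
  simp [hfω, hgω, mul_comm]

lemma MemLp.integral_sq_sub_eq_norm_sq {f g : Ω → ℝ} (hf : MemLp f 2 μ) (hg : MemLp g 2 μ) :
    ∫ ω, (f ω - g ω) ^ 2 ∂μ = ‖hf.toLp f - hg.toLp g‖ ^ 2 := by
  rw [← MemLp.toLp_sub, ← real_inner_self_eq_norm_sq, ← (hf.sub hg).integral_mul_eq_inner_toLp]
  simp [sq]

lemma MemLp.tendsto_toLp_of_tendsto_integral_sq_sub {ι : Type*} {l : Filter ι} {f : Ω → ℝ}
    {F : ι → Ω → ℝ} (hf : MemLp f 2 μ) (hF : ∀ i, MemLp (F i) 2 μ)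
    (hFf : Tendsto (fun i => ∫ ω, (f ω - F i ω) ^ 2 ∂μ) l (𝓝 0)) :
    Tendsto (fun i => (hF i).toLp (F i)) l (𝓝 (hf.toLp f)) := by
  rw [tendsto_iff_norm_sub_tendsto_zero]
  have h := hFf.sqrt
  rw [Real.sqrt_zero] at h
  refine h.congr fun i => ?_
  rw [hf.integral_sq_sub_eq_norm_sq (hF i), Real.sqrt_sq (norm_nonneg _), norm_sub_rev]

lemma tendsto_integral_mul_of_tendsto_integral_sq_sub {ι : Type*} {l : Filter ι} {f g : Ω → ℝ}
    {F G : ι → Ω → ℝ} (hf : MemLp f 2 μ) (hg : MemLp g 2 μ) (hF : ∀ i, MemLp (F i) 2 μ)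
    (hG : ∀ i, MemLp (G i) 2 μ)
    (hFf : Tendsto (fun i => ∫ ω, (f ω - F i ω) ^ 2 ∂μ) l (𝓝 0))
    (hGg : Tendsto (fun i => ∫ ω, (g ω - G i ω) ^ 2 ∂μ) l (𝓝 0)) :
    Tendsto (fun i => ∫ ω, F i ω * G i ω ∂μ) l (𝓝 (∫ ω, f ω * g ω ∂μ)) := by
  have h := (hf.tendsto_toLp_of_tendsto_integral_sq_sub hF hFf).inner (𝕜 := ℝ)
    (hg.tendsto_toLp_of_tendsto_integral_sq_sub hG hGg)
  rw [← hf.integral_mul_eq_inner_toLp hg] at h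
  exact h.congr fun i => ((hF i).integral_mul_eq_inner_toLp (hG i)).symm

lemma integral_sum_mul_sum_of_orthogonal {ι : Type*} [DecidableEq ι] {U V : ι → Ω → ℝ}
    {d : ι → ℝ} (hint : ∀ i j, Integrable (fun ω => U i ω * V j ω) μ)
    (horth : ∀ i j, ∫ ω, U i ω * V j ω ∂μ = if i = j then d j else 0)
    (s : Finset ι) (a b : ι → ℝ) :
    ∫ ω, (∑ i ∈ s, a i * U i ω) * (∑ j ∈ s, b j * V j ω) ∂μ = ∑ i ∈ s, a i * b i * d i := by
  have hterm : ∀ i j, (fun ω => a i * U i ω * (b j * V j ω))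
      = fun ω => a i * b j * (U i ω * V j ω) := fun i j => funext fun ω => by ring
  have hint' : ∀ i j, Integrable (fun ω => a i * U i ω * (b j * V j ω)) μ := fun i j => by
    rw [hterm]; exact (hint i j).const_mul _
  simp_rw [Finset.sum_mul_sum]
  rw [integral_finsetSum _ fun i _ => integrable_finsetSum _ fun j _ => hint' i j]
  refine Finset.sum_congr rfl fun i hi => ?_
  rw [integral_finsetSum _ fun j _ => hint' i j]
  simp_rw [hterm, integral_const_mul, horth, mul_ite, mul_zero]
  rw [Finset.sum_ite_eq s i, if_pos hi]

lemma hasSum_integral_mul_of_biorthogonal_expansion {U V : ℕ → Ω → ℝ} {a d : ℕ → ℝ}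
    {f g : Ω → ℝ} (hU : ∀ n, MemLp (U n) 2 μ) (hV : ∀ n, MemLp (V n) 2 μ)
    (horth : ∀ m n, ∫ ω, U m ω * V n ω ∂μ = if m = n then d n else 0) (hd : ∀ n, 0 ≤ d n)
    (hf : MemLp f 2 μ) (hg : MemLp g 2 μ)
    (hfU : Tendsto (fun N => ∫ ω, (f ω - ∑ n ∈ Finset.range N, a n * U n ω) ^ 2 ∂μ)
      atTop (𝓝 0))
    (hgV : Tendsto (fun N => ∫ ω, (g ω - ∑ n ∈ Finset.range N, a n * V n ω) ^ 2 ∂μ)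
      atTop (𝓝 0)) :
    HasSum (fun n => a n ^ 2 * d n) (∫ ω, f ω * g ω ∂μ) := by
  rw [hasSum_iff_tendsto_nat_of_nonneg fun n => mul_nonneg (sq_nonneg _) (hd n)]
  have hpartial : ∀ {W : ℕ → Ω → ℝ}, (∀ n, MemLp (W n) 2 μ) →
      ∀ N, MemLp (fun ω => ∑ n ∈ Finset.range N, a n * W n ω) 2 μ :=
    fun hW N => memLp_finsetSum _ fun n _ => (hW n).const_mul _
  refine (tendsto_integral_mul_of_tendsto_integral_sq_sub hf hg (hpartial hU) (hpartial hV)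
    hfU hgV).congr fun N => ?_
  rw [integral_sum_mul_sum_of_orthogonal (fun m n => (hU m).integrable_mul (hV n)) horth]
  simp_rw [sq]

end MeasureTheory

lemma pow_le_rpow_neg_mul_rpow_mul_pow {ρ s γ : ℝ} {k : ℕ} (hρ : 0 ≤ ρ) (hρs : ρ ≤ s)
    (hs : 0 < s) (hγ : γ ≤ k) (hk : k ≠ 0) :
    ρ ^ k ≤ s ^ (-γ) * ρ ^ γ * s ^ k := by
  have hsplit : ρ ^ k = ρ ^ γ * ρ ^ ((k : ℝ) - γ) := by
    rw [← Real.rpow_add' hρ (by simpa using hk), add_sub_cancel, Real.rpow_natCast]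
  have hs' : s ^ (-γ) * s ^ k = s ^ ((k : ℝ) - γ) := by
    rw [← Real.rpow_natCast, ← Real.rpow_add hs, neg_add_eq_sub]
  calc ρ ^ k = ρ ^ γ * ρ ^ ((k : ℝ) - γ) := hsplit
    _ ≤ ρ ^ γ * s ^ ((k : ℝ) - γ) := by gcongr
    _ = s ^ (-γ) * ρ ^ γ * s ^ k := by rw [← hs']; ring

noncomputable def oddChaosTerm (c : ℕ → ℝ) (ρ : ℝ) (n : ℕ) : ℝ :=
  c n ^ 2 / (Nat.factorial (2 * n + 1) : ℝ) * ρ ^ (2 * n + 1)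

lemma oddChaosTerm_nonneg (c : ℕ → ℝ) {ρ : ℝ} (hρ : 0 ≤ ρ) (n : ℕ) : 0 ≤ oddChaosTerm c ρ n := by
  unfold oddChaosTerm; positivity

lemma oddChaosTerm_le (c : ℕ → ℝ) {ρ s γ : ℝ} (hρ : 0 ≤ ρ) (hρs : ρ ≤ s) (hs : 0 < s) {n : ℕ}
    (hγ : γ ≤ 2 * n + 1) :
    oddChaosTerm c ρ n ≤ s ^ (-γ) * ρ ^ γ * oddChaosTerm c s n := by
  have h := pow_le_rpow_neg_mul_rpow_mul_pow (k := 2 * n + 1) hρ hρs hs (by push_cast; exact hγ)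
    (Nat.succ_ne_zero _)
  unfold oddChaosTerm
  calc c n ^ 2 / (Nat.factorial (2 * n + 1) : ℝ) * ρ ^ (2 * n + 1)
      ≤ c n ^ 2 / (Nat.factorial (2 * n + 1) : ℝ) * (s ^ (-γ) * ρ ^ γ * s ^ (2 * n + 1)) :=
        mul_le_mul_of_nonneg_left h (by positivity)
    _ = _ := by ring

lemma abs_le_of_hasSum_oddChaosTerm_tail {c : ℕ → ℝ} {ρ s γ T S : ℝ} (hρ : 0 ≤ ρ) (hρs : ρ ≤ s)
    (hs : 0 < s) (hγ : γ ≤ 3) (hT : HasSum (fun n => oddChaosTerm c ρ (n + 1)) T)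
    (hS : HasSum (oddChaosTerm c s) S) :
    |T| ≤ s ^ (-γ) * S * ρ ^ γ := by
  rw [abs_of_nonneg (hT.nonneg fun n => oddChaosTerm_nonneg c hρ _)]
  have hStail := ((hasSum_nat_add_iff' 1).2 hS).mul_left (s ^ (-γ) * ρ ^ γ)
  rw [Finset.sum_range_one] at hStail
  calc T ≤ s ^ (-γ) * ρ ^ γ * (S - oddChaosTerm c s 0) :=
        hasSum_le (fun n => oddChaosTerm_le c hρ hρs hs (by push_cast; linarith)) hT hStail
    _ ≤ s ^ (-γ) * ρ ^ γ * S := by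
        gcongr
        linarith [oddChaosTerm_nonneg c hs.le 0]
    _ = s ^ (-γ) * S * ρ ^ γ := by ring

theorem stmt_10_general {Ω : Type*} [MeasurableSpace Ω] (μ : Measure Ω)
    (Y Z : Ω → ℝ)
    (F' : ℝ → ℝ)
    (σ ρ S a : ℝ) (hσ : 0 < σ) (hρ0 : 0 ≤ ρ) (hρσ : ρ ≤ σ ^ 2)
    (c : ℕ → ℝ)
    (hwick : ∀ m n : ℕ, (∫ ω, wick σ m (Y ω) * wick σ n (Z ω) ∂μ) =
      if m = n then (Nat.factorial n : ℝ) * ρ ^ n else 0)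
    (hWY : ∀ k, MemLp (fun ω => wick σ k (Y ω)) 2 μ)
    (hWZ : ∀ k, MemLp (fun ω => wick σ k (Z ω)) 2 μ)
    (hFY : MemLp (fun ω => F' (Y ω)) 2 μ)
    (hFZ : MemLp (fun ω => F' (Z ω)) 2 μ)
    (hL2Y : Tendsto (fun N => ∫ ω, (F' (Y ω) - ∑ n ∈ Finset.range N,
        c n / (Nat.factorial (2 * n + 1) : ℝ) * wick σ (2 * n + 1) (Y ω)) ^ 2 ∂μ)
      atTop (nhds 0))
    (hL2Z : Tendsto (fun N => ∫ ω, (F' (Z ω) - ∑ n ∈ Finset.range N,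
        c n / (Nat.factorial (2 * n + 1) : ℝ) * wick σ (2 * n + 1) (Z ω)) ^ 2 ∂μ)
      atTop (nhds 0))
    (hSsum : HasSum (fun n => c n ^ 2 * σ ^ (2 * (2 * n + 1)) /
      (Nat.factorial (2 * n + 1) : ℝ)) S)
    (ha : a = c 0 / 2)
    (β' : ℝ) (hβ1 : β' ≤ 1) :
    HasSum (fun n : ℕ => c (n + 1) ^ 2 / (Nat.factorial (2 * (n + 1) + 1) : ℝ) *
        ρ ^ (2 * (n + 1) + 1))
      ((∫ ω, F' (Y ω) * F' (Z ω) ∂μ) - 4 * a ^ 2 * ρ) ∧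
    |(∫ ω, F' (Y ω) * F' (Z ω) ∂μ) - 4 * a ^ 2 * ρ| ≤
      σ ^ (-2 * (1 + β')) * S * ρ ^ (1 + β') := by
  have hT : HasSum (oddChaosTerm c ρ) (∫ ω, F' (Y ω) * F' (Z ω) ∂μ) := by
    have h := hasSum_integral_mul_of_biorthogonal_expansion (fun n => hWY (2 * n + 1))
      (fun n => hWZ (2 * n + 1)) (d := fun n => (Nat.factorial (2 * n + 1) : ℝ) * ρ ^ (2 * n + 1))
      (fun m n => by rw [hwick]; simp) (fun n => by positivity) hFY hFZ hL2Y hL2Z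
    convert h using 2 with n
    unfold oddChaosTerm
    field_simp
  have hS : HasSum (oddChaosTerm c (σ ^ 2)) S := by
    convert hSsum using 2 with n
    rw [oddChaosTerm, pow_mul]
    ring
  have hT0 : oddChaosTerm c ρ 0 = 4 * a ^ 2 * ρ := by
    simp only [oddChaosTerm, ha, mul_zero, zero_add, Nat.factorial_one, Nat.cast_one, pow_one]
    ring
  have htail := (hasSum_nat_add_iff' 1).2 hT
  rw [Finset.sum_range_one, hT0] at htail
  refine ⟨htail, ?_⟩
  rw [show -2 * (1 + β') = 2 * -(1 + β') by ring, Real.rpow_mul hσ.le, Real.rpow_two]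
  exact abs_le_of_hasSum_oddChaosTerm_tail hρ0 hρσ (by positivity) (by linarith) htail hS

/-- for jointly Gaussian centered `(Y,Z)` with equal variance `σ²` and
nonnegative covariance `ρ = 𝔼(YZ) ≤ σ²`, and an odd `F'` with chaos expansion
`F'(Y) = ∑ (c_n/(2n+1)!) Y^{⋄(2n+1)}` (in `L²`) satisfying Wick's formula, one has
`𝔼(F'(Y)F'(Z)) − 4a²ρ = ∑_{n≥1} (c_n²/(2n+1)!) ρ^{2n+1}` with `a = c₀/2`, and for
every `β' ∈ (0,1]`, `|𝔼(F'(Y)F'(Z)) − 4a²ρ| ≤ σ^{−2(1+β')} 𝔼(F'(Y))² ρ^{1+β'}`. -/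
theorem stmt_10 {Ω : Type*} [MeasurableSpace Ω] (μ : Measure Ω) [IsProbabilityMeasure μ]
    (Y Z : Ω → ℝ) (hYm : Measurable Y) (hZm : Measurable Z)
    (F' : ℝ → ℝ) (hodd : ∀ x, F' (-x) = -F' x)
    (σ ρ S a : ℝ) (hσ : 0 < σ) (hρ0 : 0 ≤ ρ) (hρσ : ρ ≤ σ ^ 2)
    (hcov : ∫ ω, Y ω * Z ω ∂μ = ρ)
    (c : ℕ → ℝ)
    (hwick : ∀ m n : ℕ, (∫ ω, wick σ m (Y ω) * wick σ n (Z ω) ∂μ) =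
      if m = n then (Nat.factorial n : ℝ) * ρ ^ n else 0)
    (hWY : ∀ k, MemLp (fun ω => wick σ k (Y ω)) 2 μ)
    (hWZ : ∀ k, MemLp (fun ω => wick σ k (Z ω)) 2 μ)
    (hFY : MemLp (fun ω => F' (Y ω)) 2 μ)
    (hFZ : MemLp (fun ω => F' (Z ω)) 2 μ)
    (hL2Y : Tendsto (fun N => ∫ ω, (F' (Y ω) - ∑ n ∈ Finset.range N,
        c n / (Nat.factorial (2 * n + 1) : ℝ) * wick σ (2 * n + 1) (Y ω)) ^ 2 ∂μ)
      atTop (nhds 0))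
    (hL2Z : Tendsto (fun N => ∫ ω, (F' (Z ω) - ∑ n ∈ Finset.range N,
        c n / (Nat.factorial (2 * n + 1) : ℝ) * wick σ (2 * n + 1) (Z ω)) ^ 2 ∂μ)
      atTop (nhds 0))
    (hSdef : S = ∫ ω, (F' (Y ω)) ^ 2 ∂μ)
    (hSsum : HasSum (fun n => c n ^ 2 * σ ^ (2 * (2 * n + 1)) /
      (Nat.factorial (2 * n + 1) : ℝ)) S)
    (ha : a = c 0 / 2)
    (β' : ℝ) (hβ0 : 0 < β') (hβ1 : β' ≤ 1) :
    HasSum (fun n : ℕ => c (n + 1) ^ 2 / (Nat.factorial (2 * (n + 1) + 1) : ℝ) *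
        ρ ^ (2 * (n + 1) + 1))
      ((∫ ω, F' (Y ω) * F' (Z ω) ∂μ) - 4 * a ^ 2 * ρ) ∧
    |(∫ ω, F' (Y ω) * F' (Z ω) ∂μ) - 4 * a ^ 2 * ρ| ≤
      σ ^ (-2 * (1 + β')) * S * ρ ^ (1 + β') :=
  stmt_10_general μ Y Z F' σ ρ S a hσ hρ0 hρσ c hwick hWY hWZ hFY hFZ hL2Y hL2Z hSsum ha β' hβ1
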